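/- If the function F is constant on the set {z ∈ ℂ^m : Σ_{k=1}^m |z_k|² = 1 and z_k ≠ 0 for every k}, then θ_i = 1 for every 1 ≤ i ≤ m (i.e. the flow is the Hopf fibration). -/

import Mathlib

open scoped BigOperators ComplexConjugate

/-- The real inner product on `ℂ^m`: `⟨v,w⟩ = Re ∑_k v_k · conj (w_k)`. -/
noncomputable def rinner {m : ℕ} (v w : Fin m → ℂ) : ℝ :=
  (∑ k : Fin m, v k * conj (w k)).re

/-- The vector field `X(z) = (iθ₁z₁,…,iθ_m z_m)` generating the flow. -/
noncomputable def sphX {m : ℕ} (θ : Fin m → ℝ) (z : Fin m → ℂ) : Fin m → ℂ :=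
  fun k => Complex.I * (θ k : ℂ) * z k

/-- The vector field `Y_l` (here `l` is a 0-based index; the paper's `Y_l` for
`1 ≤ l ≤ m−1` corresponds to indices `l` with `(l:ℕ)+1 < m`): its components are `0` below `l`,
`−(∑_{k>l}|z_k|²)·z_l` at `l`, and `|z_l|²·z_k` above `l`. -/
noncomputable def sphY {m : ℕ} (l : Fin m) (z : Fin m → ℂ) : Fin m → ℂ := fun k =>
  if (k : ℕ) < (l : ℕ) then 0
  else if k = l then
    -(((∑ j ∈ Finset.univ.filter (fun j : Fin m => (l : ℕ) < (j : ℕ)), ‖z j‖ ^ 2 : ℝ) : ℂ)) * z l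
  else ((‖z l‖ ^ 2 : ℝ) : ℂ) * z k

/-- The generic vector field `W_p` (0-based index `p`; the paper's `W_p` for `1 ≤ p ≤ m−2`
corresponds to indices `p` with `(p:ℕ)+2 < m`): components `0` below `p`,
`−(∑_{k>p}θ_k²|z_k|²)·i z_p` at `p`, and `θ_p θ_k |z_p|²·i z_k` above `p`. -/
noncomputable def sphW {m : ℕ} (θ : Fin m → ℝ) (p : Fin m) (z : Fin m → ℂ) : Fin m → ℂ := fun k =>
  if (k : ℕ) < (p : ℕ) then 0
  else if k = p then
    -(((∑ j ∈ Finset.univ.filter (fun j : Fin m => (p : ℕ) < (j : ℕ)),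
        (θ j) ^ 2 * ‖z j‖ ^ 2 : ℝ) : ℂ)) * (Complex.I * z p)
  else (((θ p) * (θ k) * ‖z p‖ ^ 2 : ℝ) : ℂ) * (Complex.I * z k)

/-- The special last vector field `W_{m−1}`, with `a` the index `m−2` and `b` the index `m−1`
(0-based): component `−θ_b|z_b|²·i z_a` at `a`, `θ_a|z_a|²·i z_b` at `b`, and `0` elsewhere. -/
noncomputable def sphWlast {m : ℕ} (θ : Fin m → ℝ) (a b : Fin m) (z : Fin m → ℂ) :
    Fin m → ℂ := fun k =>
  if k = a then -(((θ b * ‖z b‖ ^ 2 : ℝ)) : ℂ) * (Complex.I * z a)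
  else if k = b then (((θ a * ‖z a‖ ^ 2 : ℝ)) : ℂ) * (Complex.I * z b)
  else 0

/-- The full family `W_p`, `1 ≤ p ≤ m−1` (0-based: `(p:ℕ)+1 < m`): the generic `W_p` for
`p ≤ m−2` and the special `W_{m−1}` for the last index. -/
noncomputable def sphWfull {m : ℕ} (hm : 2 ≤ m) (θ : Fin m → ℝ) (p : Fin m) :
    (Fin m → ℂ) → (Fin m → ℂ) :=
  if (p : ℕ) = m - 2 then sphWlast θ ⟨m - 2, by omega⟩ ⟨m - 1, by omega⟩ else sphW θ p

/-- The Lie bracket `[U,V](z) = (DV)_z(U(z)) − (DU)_z(V(z))` of vector fields on `ℂ^m`,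
`D` being the Fréchet derivative over `ℝ`. -/
noncomputable def bracket {m : ℕ} (U V : (Fin m → ℂ) → (Fin m → ℂ)) (z : Fin m → ℂ) :
    Fin m → ℂ :=
  fderiv ℝ V z (U z) - fderiv ℝ U z (V z)

/-- The function `F` of the paper (with `a`, `b` standing for the 0-based indices `m−2`, `m−1`):
`F(z) = (2/|X|²)·{ θ_{m−1}²θ_m²(|z_{m−1}|²+|z_m|²)/(θ_{m−1}²|z_{m−1}|²+θ_m²|z_m|²)
 + ∑_{j=1}^{m−2} θ_j²(∑_{s>j}θ_s²|z_s|²)(∑_{k≥j}|z_k|²)/[(∑_{s≥j}θ_s²|z_s|²)(∑_{k>j}|z_k|²)]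
 + ∑_{j=1}^{m−2}∑_{i=j+1}^{m−1} |z_i|²|z_j|²(∑_{k>i}(θ_i²−θ_k²)|z_k|²)²
     /[(∑_{t>j}θ_t²|z_t|²)(∑_{s≥j}θ_s²|z_s|²)(∑_{k>i}|z_k|²)(∑_{k≥i}|z_k|²)] }`. -/
noncomputable def Ffun {m : ℕ} (θ : Fin m → ℝ) (a b : Fin m) (z : Fin m → ℂ) : ℝ :=
  (2 / rinner (sphX θ z) (sphX θ z)) *
    ((θ a) ^ 2 * (θ b) ^ 2 * (‖z a‖ ^ 2 + ‖z b‖ ^ 2)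
        / ((θ a) ^ 2 * ‖z a‖ ^ 2 + (θ b) ^ 2 * ‖z b‖ ^ 2)
      + (∑ j ∈ Finset.univ.filter (fun j : Fin m => (j : ℕ) < m - 2),
          (θ j) ^ 2
            * (∑ s ∈ Finset.univ.filter (fun s : Fin m => (j : ℕ) < (s : ℕ)),
                (θ s) ^ 2 * ‖z s‖ ^ 2)
            * (∑ k ∈ Finset.univ.filter (fun k : Fin m => (j : ℕ) ≤ (k : ℕ)), ‖z k‖ ^ 2)
            / ((∑ s ∈ Finset.univ.filter (fun s : Fin m => (j : ℕ) ≤ (s : ℕ)),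
                  (θ s) ^ 2 * ‖z s‖ ^ 2)
                * (∑ k ∈ Finset.univ.filter (fun k : Fin m => (j : ℕ) < (k : ℕ)), ‖z k‖ ^ 2)))
      + ∑ j ∈ Finset.univ.filter (fun j : Fin m => (j : ℕ) < m - 2),
          ∑ i ∈ Finset.univ.filter (fun i : Fin m => (j : ℕ) < (i : ℕ) ∧ (i : ℕ) < m - 1),
            ‖z i‖ ^ 2 * ‖z j‖ ^ 2
              * (∑ k ∈ Finset.univ.filter (fun k : Fin m => (i : ℕ) < (k : ℕ)),
                  ((θ i) ^ 2 - (θ k) ^ 2) * ‖z k‖ ^ 2) ^ 2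
              / ((∑ t ∈ Finset.univ.filter (fun t : Fin m => (j : ℕ) < (t : ℕ)),
                    (θ t) ^ 2 * ‖z t‖ ^ 2)
                  * (∑ s ∈ Finset.univ.filter (fun s : Fin m => (j : ℕ) ≤ (s : ℕ)),
                      (θ s) ^ 2 * ‖z s‖ ^ 2)
                  * (∑ k ∈ Finset.univ.filter (fun k : Fin m => (i : ℕ) < (k : ℕ)), ‖z k‖ ^ 2)
                  * (∑ k ∈ Finset.univ.filter (fun k : Fin m => (i : ℕ) ≤ (k : ℕ)), ‖z k‖ ^ 2)))


/-!
`F` depends on `z` only through the squared moduli `x_k = |z_k|²`, and as a function of `x` it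
is continuous at every point of the closed simplex with `x_m > 0`: each denominator contains a
positive multiple of `x_m`. Being constant on the open simplex, `F` is then constant on the edge
`x = (1 - q) e_1 + q e_m`, `0 < q ≤ 1`. There every term carrying a factor `x_i` with `1 < i < m`
vanishes and `F = (2 / D) (S + θ_1² θ_m² / D)` with `D = θ_1² (1 - q) + θ_m² q` and
`S = θ_2² + ⋯ + θ_{m-1}²`, a strictly decreasing function of `D`. Hence `D` does not depend on
`q`, i.e. `θ_m = θ_1 = 1`, and monotonicity squeezes every `θ_i` to `1`.
-/

open Finset

lemma stdSimplex_subset_closure_pos {ι : Type*} [Fintype ι] [Nonempty ι] :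
    stdSimplex ℝ ι ⊆ closure {x ∈ stdSimplex ℝ ι | ∀ i, 0 < x i} := by
  intro x hx
  have hu : (fun _ => (Fintype.card ι : ℝ)⁻¹) ∈ stdSimplex ℝ ι :=
    ⟨fun _ => by positivity, by simp⟩
  have hseg : openSegment ℝ x (fun _ => (Fintype.card ι : ℝ)⁻¹)
      ⊆ {x ∈ stdSimplex ℝ ι | ∀ i, 0 < x i} := by
    rintro y ⟨s, t, hs, ht, hst, rfl⟩
    refine ⟨convex_stdSimplex ℝ ι hx hu hs.le ht.le hst, fun i => ?_⟩
    have := hx.1 i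
    simp only [Pi.add_apply, Pi.smul_apply, smul_eq_mul]
    positivity
  exact closure_mono hseg (segment_subset_closure_openSegment (left_mem_segment ℝ _ _))

lemma eq_of_continuousAt_of_mem_closure {X Y : Type*} [TopologicalSpace X] [TopologicalSpace Y]
    [T1Space Y] {f : X → Y} {s : Set X} {x : X} {c : Y} (hf : ContinuousAt f x)
    (hx : x ∈ closure s) (hs : ∀ y ∈ s, f y = c) : f x = c := by
  have hsc : f '' s ⊆ {c} := Set.image_subset_iff.2 hs
  simpa using closure_mono hsc (mem_closure_image hf hx)

noncomputable def edgePt {ι : Type*} [DecidableEq ι] (i j : ι) (q : ℝ) : ι → ℝ :=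
  Pi.single i (1 - q) + Pi.single j q

lemma sum_mul_edgePt {ι : Type*} [DecidableEq ι] (S : Finset ι) (f : ι → ℝ) (i j : ι) (q : ℝ) :
    ∑ s ∈ S, f s * edgePt i j q s
      = (if i ∈ S then f i * (1 - q) else 0) + (if j ∈ S then f j * q else 0) := by
  simp [edgePt, Pi.single_apply, mul_add, sum_add_distrib]

lemma edgePt_mem_stdSimplex {ι : Type*} [Fintype ι] [DecidableEq ι] (i j : ι)
    {q : ℝ} (hq : 0 ≤ q) (hq1 : q ≤ 1) : edgePt i j q ∈ stdSimplex ℝ ι := by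
  refine ⟨fun k => add_nonneg ?_ ?_, ?_⟩
  · rw [Pi.single_apply]; split_ifs <;> linarith
  · rw [Pi.single_apply]; split_ifs <;> linarith
  · simpa using sum_mul_edgePt univ 1 i j q

lemma strictAntiOn_two_div_mul_add_div {S c : ℝ} (hS : 0 ≤ S) (hc : 0 < c) :
    StrictAntiOn (fun D : ℝ => 2 / D * (S + c / D)) (Set.Ioi 0) := by
  intro D hD D' hD' hlt
  simp only [Set.mem_Ioi] at hD hD'
  dsimp only
  gcongr

lemma norm_ofReal_sqrt_sq {r : ℝ} (hr : 0 ≤ r) : ‖((√r : ℝ) : ℂ)‖ ^ 2 = r := by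
  rw [Complex.norm_real, Real.norm_eq_abs, sq_abs, Real.sq_sqrt hr]

noncomputable def Fsq {m : ℕ} (θ : Fin m → ℝ) (a b : Fin m) (x : Fin m → ℝ) : ℝ :=
  (2 / ∑ k : Fin m, θ k ^ 2 * x k) *
    ((θ a) ^ 2 * (θ b) ^ 2 * (x a + x b)
        / ((θ a) ^ 2 * x a + (θ b) ^ 2 * x b)
      + (∑ j ∈ Finset.univ.filter (fun j : Fin m => (j : ℕ) < m - 2),
          (θ j) ^ 2
            * (∑ s ∈ Finset.univ.filter (fun s : Fin m => (j : ℕ) < (s : ℕ)),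
                (θ s) ^ 2 * x s)
            * (∑ k ∈ Finset.univ.filter (fun k : Fin m => (j : ℕ) ≤ (k : ℕ)), x k)
            / ((∑ s ∈ Finset.univ.filter (fun s : Fin m => (j : ℕ) ≤ (s : ℕ)),
                  (θ s) ^ 2 * x s)
                * (∑ k ∈ Finset.univ.filter (fun k : Fin m => (j : ℕ) < (k : ℕ)), x k)))
      + ∑ j ∈ Finset.univ.filter (fun j : Fin m => (j : ℕ) < m - 2),
          ∑ i ∈ Finset.univ.filter (fun i : Fin m => (j : ℕ) < (i : ℕ) ∧ (i : ℕ) < m - 1),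
            x i * x j
              * (∑ k ∈ Finset.univ.filter (fun k : Fin m => (i : ℕ) < (k : ℕ)),
                  ((θ i) ^ 2 - (θ k) ^ 2) * x k) ^ 2
              / ((∑ t ∈ Finset.univ.filter (fun t : Fin m => (j : ℕ) < (t : ℕ)),
                    (θ t) ^ 2 * x t)
                  * (∑ s ∈ Finset.univ.filter (fun s : Fin m => (j : ℕ) ≤ (s : ℕ)),
                      (θ s) ^ 2 * x s)
                  * (∑ k ∈ Finset.univ.filter (fun k : Fin m => (i : ℕ) < (k : ℕ)), x k)
                  * (∑ k ∈ Finset.univ.filter (fun k : Fin m => (i : ℕ) ≤ (k : ℕ)), x k)))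

lemma rinner_sphX_self {m : ℕ} (θ : Fin m → ℝ) (z : Fin m → ℂ) :
    rinner (sphX θ z) (sphX θ z) = ∑ k, θ k ^ 2 * ‖z k‖ ^ 2 := by
  simp only [rinner, sphX, Complex.re_sum, Complex.mul_conj, Complex.normSq_eq_norm_sq,
    norm_mul, Complex.norm_I, Complex.norm_real, Real.norm_eq_abs, one_mul, mul_pow, sq_abs]
  norm_cast

lemma Ffun_eq_Fsq {m : ℕ} (θ : Fin m → ℝ) (a b : Fin m) (z : Fin m → ℂ) :
    Ffun θ a b z = Fsq θ a b (fun k => ‖z k‖ ^ 2) := by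
  rw [Ffun, Fsq, rinner_sphX_self]

lemma Fsq_eq_of_Ffun_eq_of_pos {m : ℕ} {θ : Fin m → ℝ} {a b : Fin m}
    (hconst : ∀ z w : Fin m → ℂ,
      (∑ k : Fin m, ‖z k‖ ^ 2 = 1) → (∀ k, z k ≠ 0) →
      (∑ k : Fin m, ‖w k‖ ^ 2 = 1) → (∀ k, w k ≠ 0) → Ffun θ a b z = Ffun θ a b w)
    {x y : Fin m → ℝ} (hx : x ∈ stdSimplex ℝ (Fin m)) (hx0 : ∀ k, 0 < x k)
    (hy : y ∈ stdSimplex ℝ (Fin m)) (hy0 : ∀ k, 0 < y k) : Fsq θ a b x = Fsq θ a b y := by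
  have hsqrt : ∀ x : Fin m → ℝ, (∀ k, 0 < x k) →
      (fun k => ‖((√(x k) : ℝ) : ℂ)‖ ^ 2) = x := fun x hx0 =>
    funext fun k => norm_ofReal_sqrt_sq (hx0 k).le
  have hne : ∀ x : Fin m → ℝ, (∀ k, 0 < x k) → ∀ k, ((√(x k) : ℝ) : ℂ) ≠ 0 := fun x hx0 k =>
    Complex.ofReal_ne_zero.2 (Real.sqrt_pos.2 (hx0 k)).ne'
  have h := hconst _ _ (by rw [hsqrt x hx0]; exact hx.2) (hne x hx0)
    (by rw [hsqrt y hy0]; exact hy.2) (hne y hy0)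
  rwa [Ffun_eq_Fsq, Ffun_eq_Fsq, hsqrt x hx0, hsqrt y hy0] at h

lemma continuousAt_Fsq {m : ℕ} (θ : Fin m → ℝ) (a b : Fin m) (hb : (b : ℕ) = m - 1)
    (hθb : θ b ≠ 0) {x : Fin m → ℝ} (hx : ∀ k, 0 ≤ x k) (hxb : 0 < x b) :
    ContinuousAt (Fsq θ a b) x := by
  have hw : ∀ k, 0 ≤ θ k ^ 2 * x k := fun k => mul_nonneg (sq_nonneg _) (hx k)
  have hwb : 0 < θ b ^ 2 * x b := by positivity
  have hw_pos : ∀ S : Finset (Fin m), b ∈ S → 0 < ∑ s ∈ S, θ s ^ 2 * x s := fun S hS =>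
    sum_pos' (fun k _ => hw k) ⟨b, hS, hwb⟩
  have hx_pos : ∀ S : Finset (Fin m), b ∈ S → 0 < ∑ s ∈ S, x s := fun S hS =>
    sum_pos' (fun k _ => hx k) ⟨b, hS, hxb⟩
  have hmem_lt : ∀ j : Fin m, (j : ℕ) < m - 1 →
      b ∈ univ.filter (fun s : Fin m => (j : ℕ) < (s : ℕ)) := fun j hj =>
    mem_filter.2 ⟨mem_univ b, hb ▸ hj⟩
  have hmem_le : ∀ j : Fin m, b ∈ univ.filter (fun s : Fin m => (j : ℕ) ≤ (s : ℕ)) := fun j =>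
    mem_filter.2 ⟨mem_univ b, by omega⟩
  unfold Fsq
  refine ContinuousAt.mul ?_ (ContinuousAt.add (ContinuousAt.add ?_ ?_) ?_)
  · exact continuousAt_const.div (continuous_finsetSum _ fun k _ => by fun_prop).continuousAt
      (hw_pos univ (mem_univ b)).ne'
  · exact ContinuousAt.div (by fun_prop) (by fun_prop) (add_pos_of_nonneg_of_pos (hw a) hwb).ne'
  · refine tendsto_finsetSum _ fun j hj => ?_
    have hj : (j : ℕ) < m - 1 := by have := (mem_filter.1 hj).2; omega
    exact ContinuousAt.div (by fun_prop) (by fun_prop)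
      (mul_pos (hw_pos _ (hmem_le j)) (hx_pos _ (hmem_lt j hj))).ne'
  · refine tendsto_finsetSum _ fun j hj => tendsto_finsetSum _ fun i hi => ?_
    have hj : (j : ℕ) < m - 1 := by have := (mem_filter.1 hj).2; omega
    have hi : (i : ℕ) < m - 1 := (mem_filter.1 hi).2.2
    exact ContinuousAt.div (by fun_prop) (by fun_prop) (mul_pos (mul_pos (mul_pos
      (hw_pos _ (hmem_lt j hj)) (hw_pos _ (hmem_le j))) (hx_pos _ (hmem_lt i hi)))
      (hx_pos _ (hmem_le i))).ne'

lemma Fsq_eq_of_Ffun_eq {m : ℕ} {θ : Fin m → ℝ} {a b : Fin m} (hb : (b : ℕ) = m - 1)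
    (hθb : θ b ≠ 0)
    (hconst : ∀ z w : Fin m → ℂ,
      (∑ k : Fin m, ‖z k‖ ^ 2 = 1) → (∀ k, z k ≠ 0) →
      (∑ k : Fin m, ‖w k‖ ^ 2 = 1) → (∀ k, w k ≠ 0) → Ffun θ a b z = Ffun θ a b w)
    {x y : Fin m → ℝ} (hx : x ∈ stdSimplex ℝ (Fin m)) (hxb : 0 < x b)
    (hy : y ∈ stdSimplex ℝ (Fin m)) (hyb : 0 < y b) : Fsq θ a b x = Fsq θ a b y := by
  have : Nonempty (Fin m) := ⟨b⟩
  have hm : (0 : ℝ) < m := Nat.cast_pos.2 (by omega)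
  have hu : (fun _ => (m : ℝ)⁻¹) ∈ stdSimplex ℝ (Fin m) :=
    ⟨fun _ => by positivity, by simp [mul_inv_cancel₀ hm.ne']⟩
  have hconst' : ∀ x ∈ stdSimplex ℝ (Fin m), 0 < x b →
      Fsq θ a b x = Fsq θ a b (fun _ => (m : ℝ)⁻¹) := fun x hx hxb =>
    eq_of_continuousAt_of_mem_closure (continuousAt_Fsq θ a b hb hθb hx.1 hxb)
      (stdSimplex_subset_closure_pos hx) fun z hz =>
        Fsq_eq_of_Ffun_eq_of_pos hconst hz.1 hz.2 hu fun _ => inv_pos.2 hm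
  rw [hconst' x hx hxb, hconst' y hy hyb]

section Edge

variable {m : ℕ} {o b : Fin m}

lemma sum_filter_lt_mul_edgePt (ho : (o : ℕ) = 0) (hb : (b : ℕ) = m - 1) {j : Fin m}
    (hj : (j : ℕ) < m - 1) (f : Fin m → ℝ) (q : ℝ) :
    ∑ s ∈ univ.filter (fun s : Fin m => (j : ℕ) < (s : ℕ)), f s * edgePt o b q s = f b * q := by
  simp only [sum_mul_edgePt, mem_filter, mem_univ, true_and, ho, hb]
  rw [if_neg (by omega), if_pos hj, zero_add]

lemma sum_filter_le_mul_edgePt (ho : (o : ℕ) = 0) (hb : (b : ℕ) = m - 1) (j : Fin m)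
    (f : Fin m → ℝ) (q : ℝ) :
    ∑ s ∈ univ.filter (fun s : Fin m => (j : ℕ) ≤ (s : ℕ)), f s * edgePt o b q s
      = (if (j : ℕ) = 0 then f o * (1 - q) else 0) + f b * q := by
  simp only [sum_mul_edgePt, mem_filter, mem_univ, true_and, ho, hb, Nat.le_zero]
  rw [if_pos (by omega : (j : ℕ) ≤ m - 1)]

lemma edgePt_apply_of_ne {i : Fin m} (hio : i ≠ o) (hib : i ≠ b) (q : ℝ) :
    edgePt o b q i = 0 := by
  simp [edgePt, hio, hib]

lemma edgePt_apply_right (hob : o ≠ b) (q : ℝ) : edgePt o b q b = q := by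
  simp [edgePt, hob.symm]

lemma edgePt_apply_left (hob : o ≠ b) (q : ℝ) : edgePt o b q o = 1 - q := by
  simp [edgePt, hob]

lemma Fsq_summand_edgePt (θ : Fin m → ℝ) (ho : (o : ℕ) = 0) (hb : (b : ℕ) = m - 1)
    (hθb : θ b ≠ 0) {q : ℝ} (hq : q ≠ 0) {j : Fin m} (hj : (j : ℕ) < m - 1) :
    θ j ^ 2 * (∑ s ∈ univ.filter (fun s : Fin m => (j : ℕ) < (s : ℕ)), θ s ^ 2 * edgePt o b q s)
        * (∑ k ∈ univ.filter (fun k : Fin m => (j : ℕ) ≤ (k : ℕ)), edgePt o b q k)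
      / ((∑ s ∈ univ.filter (fun s : Fin m => (j : ℕ) ≤ (s : ℕ)), θ s ^ 2 * edgePt o b q s)
        * (∑ k ∈ univ.filter (fun k : Fin m => (j : ℕ) < (k : ℕ)), edgePt o b q k))
      = if (j : ℕ) = 0 then θ o ^ 2 * θ b ^ 2 / (θ o ^ 2 * (1 - q) + θ b ^ 2 * q)
        else θ j ^ 2 := by
  have hlt := sum_filter_lt_mul_edgePt ho hb hj 1 q
  have hle := sum_filter_le_mul_edgePt ho hb j 1 q
  simp only [Pi.one_apply, one_mul] at hlt hle
  rw [sum_filter_lt_mul_edgePt ho hb hj, sum_filter_le_mul_edgePt ho hb, hlt, hle]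
  split_ifs with hj0
  · rw [Fin.ext (hj0.trans ho.symm), sub_add_cancel, mul_one]
    field_simp
  · rw [zero_add, zero_add]
    field_simp

lemma sq_add_sum_ite_eq (θ : Fin m → ℝ) (hm : 2 < m) {a : Fin m} (ho : (o : ℕ) = 0)
    (ha : (a : ℕ) = m - 2) (c : ℝ) :
    θ a ^ 2 + ∑ j ∈ univ.filter (fun j : Fin m => (j : ℕ) < m - 2),
        (if (j : ℕ) = 0 then c else θ j ^ 2)
      = ∑ j ∈ univ.filter (fun j : Fin m => 0 < (j : ℕ) ∧ (j : ℕ) < m - 1), θ j ^ 2 + c := by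
  have hzero : univ.filter (fun j : Fin m => (j : ℕ) < m - 2 ∧ (j : ℕ) = 0) = {o} := by
    ext j; simp [Fin.ext_iff, ho]; omega
  have hpos : univ.filter (fun j : Fin m => 0 < (j : ℕ) ∧ (j : ℕ) < m - 1)
      = insert a (univ.filter (fun j : Fin m => (j : ℕ) < m - 2 ∧ ¬ (j : ℕ) = 0)) := by
    ext j; simp [Fin.ext_iff, ha]; omega
  rw [sum_ite, filter_filter, filter_filter, hzero, hpos, sum_insert (by simp [ha]),
    sum_singleton]
  ring

lemma Fsq_edgePt (hm : 2 ≤ m) (θ : Fin m → ℝ) {a : Fin m} (ho : (o : ℕ) = 0)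
    (ha : (a : ℕ) = m - 2) (hb : (b : ℕ) = m - 1) (hθb : θ b ≠ 0) {q : ℝ} (hq : q ≠ 0) :
    Fsq θ a b (edgePt o b q)
      = 2 / (θ o ^ 2 * (1 - q) + θ b ^ 2 * q) *
        (∑ j ∈ univ.filter (fun j : Fin m => 0 < (j : ℕ) ∧ (j : ℕ) < m - 1), θ j ^ 2
          + θ o ^ 2 * θ b ^ 2 / (θ o ^ 2 * (1 - q) + θ b ^ 2 * q)) := by
  have hob : o ≠ b := by rw [ne_eq, Fin.ext_iff]; omega
  have hX : ∑ k, θ k ^ 2 * edgePt o b q k = θ o ^ 2 * (1 - q) + θ b ^ 2 * q := by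
    simp only [sum_mul_edgePt, mem_univ, if_true]
  have hC : ∀ j ∈ univ.filter (fun j : Fin m => (j : ℕ) < m - 2),
      ∀ i ∈ univ.filter (fun i : Fin m => (j : ℕ) < (i : ℕ) ∧ (i : ℕ) < m - 1),
      edgePt o b q i = 0 := by
    intro j _ i hi
    simp only [mem_filter, mem_univ, true_and] at hi
    exact edgePt_apply_of_ne (by rw [ne_eq, Fin.ext_iff]; omega)
      (by rw [ne_eq, Fin.ext_iff]; omega) q
  rw [Fsq, hX,
    sum_congr rfl fun j hj => Fsq_summand_edgePt θ ho hb hθb hq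
      (by have := (mem_filter.1 hj).2; omega),
    sum_eq_zero fun j hj => sum_eq_zero fun i hi => by
      rw [hC j hj i hi, zero_mul, zero_mul, zero_div], add_zero]
  congr 1
  rcases hm.eq_or_lt with rfl | hm3
  · rw [filter_false_of_mem fun j _ => by omega, filter_false_of_mem fun j _ => by omega,
      sum_empty, sum_empty,
      show a = o from Fin.ext (by omega), edgePt_apply_left hob, edgePt_apply_right hob,
      sub_add_cancel, mul_one, add_zero, zero_add]
  · rw [edgePt_apply_of_ne (by rw [ne_eq, Fin.ext_iff]; omega)
        (by rw [ne_eq, Fin.ext_iff]; omega),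
      edgePt_apply_right hob, mul_zero, zero_add, zero_add,
      show θ a ^ 2 * θ b ^ 2 * q / (θ b ^ 2 * q) = θ a ^ 2 by field_simp,
      sq_add_sum_ite_eq θ hm3 ho ha]

end Edge

/-- If `F` is constant on the set of points of the unit sphere with all coordinates nonzero,
then `θ_i = 1` for every `i`, i.e. the flow is the Hopf fibration. -/
theorem stmt19 {m : ℕ} (hm : 2 ≤ m) (θ : Fin m → ℝ) (hθ1 : θ ⟨0, by omega⟩ = 1)
    (hmono : Monotone θ)
    (hconst : ∀ z w : Fin m → ℂ,
      (∑ k : Fin m, ‖z k‖ ^ 2 = 1) → (∀ k, z k ≠ 0) →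
      (∑ k : Fin m, ‖w k‖ ^ 2 = 1) → (∀ k, w k ≠ 0) →
      Ffun θ ⟨m - 2, by omega⟩ ⟨m - 1, by omega⟩ z
        = Ffun θ ⟨m - 2, by omega⟩ ⟨m - 1, by omega⟩ w) :
    ∀ i, θ i = 1 := by
  set o : Fin m := ⟨0, by omega⟩
  set b : Fin m := ⟨m - 1, by omega⟩
  have hθ : ∀ k, 1 ≤ θ k := fun k => hθ1 ▸ hmono (Fin.le_def.2 (Nat.zero_le k))
  have hθb : θ b ≠ 0 := (zero_lt_one.trans_le (hθ b)).ne'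
  have hpos : ∀ k, 0 < θ k ^ 2 := fun k => pow_pos (by linarith [hθ k]) 2
  have hob : o ≠ b := Fin.ne_of_val_ne (show 0 ≠ m - 1 by omega)
  have heq := Fsq_eq_of_Ffun_eq rfl hθb hconst
    (edgePt_mem_stdSimplex o b (q := 1 / 2) (by norm_num) (by norm_num))
    (by rw [edgePt_apply_right hob]; norm_num)
    (edgePt_mem_stdSimplex o b (q := 1) zero_le_one le_rfl)
    (by rw [edgePt_apply_right hob]; norm_num)
  rw [Fsq_edgePt hm θ rfl rfl rfl hθb (by norm_num),
    Fsq_edgePt hm θ rfl rfl rfl hθb one_ne_zero] at heq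
  have hD := (strictAntiOn_two_div_mul_add_div (sum_nonneg fun j _ => (hpos j).le)
    (mul_pos (hpos o) (hpos b))).injOn
    (Set.mem_Ioi.2 (by nlinarith [hpos o, hpos b])) (Set.mem_Ioi.2 (by nlinarith [hpos b])) heq
  have hb1 : θ b = 1 := by nlinarith [hθ b]
  intro i
  exact le_antisymm (hb1 ▸ hmono (Fin.le_def.2 (Nat.le_sub_one_of_lt i.isLt))) (hθ i)
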